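/- arXiv:2101.01631 — 9 statements merged into one kernel-verified Lean document; each statement's English description precedes it below -/
import Mathlib

section
/- Let f, g : Finset (Fin n) → ℝ with g positive everywhere, and let c* := max over S of (f(S) - g(S)), attained at y*. Assume g(S) + c* > 0 for all S. If x maximizes S ↦ f(S)/(g(S) + c*), then f(x) - g(x) ≥ c*, and hence x also maximizes S ↦ f(S) - g(S). -/
theorem stmt_1 (n : ℕ) (f g : Finset (Fin n) → ℝ) (hg : ∀ S, 0 < g S)
    (ystar : Finset (Fin n)) (hystar : ∀ S : Finset (Fin n), f S - g S ≤ f ystar - g ystar)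
    (cstar : ℝ) (hcstar : cstar = f ystar - g ystar)
    (hpos : ∀ S : Finset (Fin n), 0 < g S + cstar)
    (x : Finset (Fin n))
    (hx : ∀ S : Finset (Fin n), f S / (g S + cstar) ≤ f x / (g x + cstar)) :
    cstar ≤ f x - g x ∧ ∀ S : Finset (Fin n), f S - g S ≤ f x - g x := by
  have hy : f ystar = g ystar + cstar := by linarith [hcstar]
  have h1 : (1 : ℝ) ≤ f x / (g x + cstar) := by
    have := hx ystar
    rw [hy, div_self (ne_of_gt (hpos ystar))] at this
    exact this
  have h2 : g x + cstar ≤ f x := by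
    have := (one_le_div (hpos x)).mp h1
    linarith
  constructor
  · linarith
  · intro S; linarith [hystar S]
end

section
/- Let f, g be real-valued functions on a nonempty finite type X with g positive, let λ ∈ ℝ, and let x_λ maximize x ↦ f(x) - λ·g(x). If f(x_λ)/g(x_λ) ≤ λ, then max_x f(x)/g(x) ≤ λ; if f(x_λ)/g(x_λ) > λ, then max_x f(x)/g(x) > λ. -/
theorem stmt_2 (X : Type*) [Fintype X] [Nonempty X] (f g : X → ℝ)
    (hg : ∀ x, 0 < g x) (lam : ℝ) (xlam : X)
    (hxlam : ∀ x, f x - lam * g x ≤ f xlam - lam * g xlam) :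
    (f xlam / g xlam ≤ lam → ∀ x, f x / g x ≤ lam) ∧
      (lam < f xlam / g xlam → ∃ x, lam < f x / g x) := by
  constructor
  · intro h x
    rw [div_le_iff₀ (hg _)] at *
    have := hxlam x
    nlinarith
  · intro h
    exact ⟨xlam, h⟩
end

section
/- Let X be a nonempty finite type, f, g : X → ℝ with f ≥ 0 and g > 0, α ∈ [0,1], c ∈ ℝ with g(x) + c > 0 for all x. Suppose y satisfies the ratio approximation guarantee f(y)/(g(y)+c) ≥ α · f(x')/(g(x')+c) for all x'. If in addition f(y) - g(y) ≤ c, then α·f(x') - g(x') ≤ c for all x' ∈ X. -/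
theorem stmt_3 (X : Type*) [Fintype X] [Nonempty X] (f g : X → ℝ)
    (hf : ∀ x, 0 ≤ f x) (hg : ∀ x, 0 < g x)
    (α : ℝ) (hα : α ∈ Set.Icc (0:ℝ) 1) (c : ℝ) (hc : ∀ x, 0 < g x + c)
    (y : X) (hy : ∀ x', α * (f x' / (g x' + c)) ≤ f y / (g y + c))
    (hyc : f y - g y ≤ c) :
    ∀ x' : X, α * f x' - g x' ≤ c := by
  intro x
  have h1 : f y / (g y + c) ≤ 1 := by
    rw [div_le_one (hc y)]; linarith
  have h2 : α * (f x / (g x + c)) ≤ 1 := le_trans (hy x) h1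
  have h3 : α * f x ≤ g x + c := by
    have := hc x
    rw [mul_div_assoc', div_le_one this] at h2
    linarith
  linarith
end

section
/- Let X be a nonempty finite type, f, g : X → ℝ with f ≥ 0 and g > 0, α ∈ [0,1], λ ≥ 0. Suppose y satisfies f(y) - λ·g(y) ≥ α·f(x') - λ·g(x') for all x' ∈ X. If f(y)/g(y) ≤ λ, then α·f(x')/g(x') ≤ λ for all x' ∈ X. -/
theorem stmt_4 (X : Type*) [Fintype X] [Nonempty X] (f g : X → ℝ)
    (hf : ∀ x, 0 ≤ f x) (hg : ∀ x, 0 < g x)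
    (α : ℝ) (hα : α ∈ Set.Icc (0:ℝ) 1) (lam : ℝ) (hlam : 0 ≤ lam)
    (y : X) (hy : ∀ x', α * f x' - lam * g x' ≤ f y - lam * g y)
    (hylam : f y / g y ≤ lam) :
    ∀ x' : X, α * (f x' / g x') ≤ lam := by
  intro x'
  have hy0 : f y - lam * g y ≤ 0 := by
    have := (div_le_iff₀ (hg y)).mp hylam
    linarith
  have h := hy x'
  rw [← mul_div_assoc, div_le_iff₀ (hg x')]
  nlinarith [hg x']
end

section
/- Let f, g be modular set functions on subsets of Fin n with g positive and singleton marginals g_i > 0, and let λ := max_S f(S)/g(S). Then the set S* := {i : f_i/g_i > λ} satisfies f(S*) - λ·g(S*) = max_S (f(S) - λ·g(S)) = 0, and hence S* maximizes f/g. -/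
theorem stmt_10 (n : ℕ) (f g : Finset (Fin n) → ℝ)
    (hf : ∀ S : Finset (Fin n), f S = f ∅ + ∑ i ∈ S, (f {i} - f ∅))
    (hg : ∀ S : Finset (Fin n), g S = g ∅ + ∑ i ∈ S, (g {i} - g ∅))
    (hgpos : ∀ S : Finset (Fin n), 0 < g S)
    (hgi : ∀ i : Fin n, 0 < g {i} - g ∅)
    (lam : ℝ) (hlam : IsGreatest (Set.range fun S : Finset (Fin n) => f S / g S) lam)
    (Sstar : Finset (Fin n))
    (hSstar : Sstar = Finset.univ.filter fun i => lam < (f {i} - f ∅) / (g {i} - g ∅)) :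
    f Sstar - lam * g Sstar = 0 ∧
      (∀ S : Finset (Fin n), f S - lam * g S ≤ 0) ∧
      ∀ S : Finset (Fin n), f S / g S ≤ f Sstar / g Sstar := by
  set t : Fin n → ℝ := fun i => (f {i} - f ∅) - lam * (g {i} - g ∅) with ht
  -- h S = f S - lam * g S expressed modularly
  have hmod : ∀ S : Finset (Fin n),
      f S - lam * g S = (f ∅ - lam * g ∅) + ∑ i ∈ S, t i := by
    intro S
    simp only [hf S, hg S, ht, Finset.sum_sub_distrib, Finset.mul_sum, mul_add, mul_sub]
    ring
  -- part 2
  have h2 : ∀ S : Finset (Fin n), f S - lam * g S ≤ 0 := by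
    intro S
    have := hlam.2 ⟨S, rfl⟩
    have hg' := hgpos S
    rw [div_le_iff₀ hg'] at this
    linarith
  -- membership in Sstar iff t i > 0
  have hmem : ∀ i : Fin n, i ∈ Sstar ↔ 0 < t i := by
    intro i
    rw [hSstar, Finset.mem_filter]
    simp only [Finset.mem_univ, true_and]
    rw [lt_div_iff₀ (hgi i)]
    constructor <;> intro h <;> (simp only [ht] at h ⊢) <;> linarith
  -- Sstar maximizes the sum
  have hsum : ∀ S : Finset (Fin n), ∑ i ∈ S, t i ≤ ∑ i ∈ Sstar, t i := by
    intro S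
    have h1 : ∑ i ∈ S, t i ≤ ∑ i ∈ S ∩ Sstar, t i := by
      rw [← Finset.sum_inter_add_sum_sdiff S Sstar t]
      have : ∑ i ∈ S \ Sstar, t i ≤ 0 := by
        apply Finset.sum_nonpos
        intro i hi
        rcases Finset.mem_sdiff.mp hi with ⟨_, hns⟩
        have := (hmem i).not.mp hns
        linarith [not_lt.mp this]
      linarith
    have h2' : ∑ i ∈ S ∩ Sstar, t i ≤ ∑ i ∈ Sstar, t i := by
      apply Finset.sum_le_sum_of_subset_of_nonneg (Finset.inter_subset_right)
      intro i hi _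
      exact le_of_lt ((hmem i).mp hi)
    linarith
  -- attained
  obtain ⟨S₀, hS₀⟩ := hlam.1
  have hS0 : f S₀ - lam * g S₀ = 0 := by
    have := hgpos S₀
    field_simp at hS₀
    linarith
  have h1 : f Sstar - lam * g Sstar = 0 := by
    have hle := h2 Sstar
    have hge : f S₀ - lam * g S₀ ≤ f Sstar - lam * g Sstar := by
      rw [hmod S₀, hmod Sstar]
      linarith [hsum S₀]
    linarith
  refine ⟨h1, h2, ?_⟩
  intro S
  have hgS := hgpos S
  have hgSs := hgpos Sstar
  have : f Sstar / g Sstar = lam := by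
    field_simp
    linarith
  rw [this, div_le_iff₀ hgS]
  linarith [h2 S]
end

section
/- Let f, g : Finset (Fin n) → ℝ be nonnegative, monotone, submodular, with g having positive marginals, and let c_g be the curvature of g with c_g < 1. Let S_0 = ∅ ⊂ S_1 ⊂ ... ⊂ S_n be the greedy chain where S_k = S_{k-1} ∪ {i_k} and i_k maximizes the marginal ratio (f(S_{k-1}∪{i}) - f(S_{k-1}))/(g(S_{k-1}∪{i}) - g(S_{k-1})). Then for any S* and any k with f(S*) - f(S_{k-1}) > 0: (1 - c_g)·(g(S_k) - g(S_{k-1}))/(g(S*) - g(∅)) ≤ (f(S_k) - f(S_{k-1}))/(f(S*) - f(S_{k-1})), provided g(S*) > g(∅). -/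
/-! Write `A = S_k`, let `i` be the greedy element and `r = Δ_i f(A) / Δ_i g(A)` its ratio.
For `j ∉ A` the greedy choice, diminishing returns of `g` and the definition of the curvature give
`(1 - c_g) Δ_j f(A) ≤ (1 - c_g) r (g{j} - g∅) ≤ r (g(univ) - g(univ \ {j}))`.
Summing over `j ∈ S*`, the left side dominates `(1 - c_g)(f(S*) - f(A))` by submodularity and
monotonicity of `f`, and the right side is at most `r (g(S*) - g∅)` by submodularity of `g`. -/

/-- The greedy chain of the Ψ-Greedy algorithm: start from ∅ and at each step add the
element maximizing the ratio of marginal gains of `f` over `g`. -/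
def GreedyChain (n : ℕ) (f g : Finset (Fin n) → ℝ) (S : ℕ → Finset (Fin n)) : Prop :=
  S 0 = ∅ ∧ ∀ k < n, ∃ i ∉ S k,
    S (k + 1) = insert i (S k) ∧
    ∀ j ∉ S k,
      (f (insert j (S k)) - f (S k)) / (g (insert j (S k)) - g (S k)) ≤
        (f (insert i (S k)) - f (S k)) / (g (insert i (S k)) - g (S k))

theorem Finset.inf'_div_mul_le {ι : Type*} {s : Finset ι} (hs : s.Nonempty) (a b : ι → ℝ)
    {j : ι} (hj : j ∈ s) (hb : 0 < b j) :
    s.inf' hs (fun i => a i / b i) * b j ≤ a j :=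
  (le_div_iff₀ hb).1 (Finset.inf'_le _ hj)

def Submodular {α : Type*} [DecidableEq α] (f : Finset α → ℝ) : Prop :=
  ∀ S T : Finset α, f (S ∪ T) + f (S ∩ T) ≤ f S + f T

namespace Submodular

variable {α : Type*} [DecidableEq α] {f : Finset α → ℝ}

theorem marginal_antitone (hf : Submodular f) {A B : Finset α} {j : α} (hAB : A ⊆ B)
    (hj : j ∉ B) : f (insert j B) - f B ≤ f (insert j A) - f A := by
  have h := hf (insert j A) B
  rw [Finset.insert_union, Finset.union_eq_right.2 hAB, Finset.insert_inter_of_notMem hj,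
    Finset.inter_eq_left.2 hAB] at h
  linarith

theorem marginal_le_singleton (hf : Submodular f) {A : Finset α} {j : α} (hj : j ∉ A) :
    f (insert j A) - f A ≤ f {j} - f ∅ := by
  simpa using hf.marginal_antitone (Finset.empty_subset A) hj

theorem sub_le_sum_marginal (hf : Submodular f) (A T : Finset α) :
    f (A ∪ T) - f A ≤ ∑ j ∈ T, (f (insert j A) - f A) := by
  induction T using Finset.induction_on with
  | empty => simp
  | @insert j T hjT ih =>
    rw [Finset.sum_insert hjT, Finset.union_insert]
    by_cases hj : j ∈ A ∪ T
    · have hjA : j ∈ A := (Finset.mem_union.1 hj).resolve_right hjT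
      rw [Finset.insert_eq_self.2 hj, Finset.insert_eq_self.2 hjA]
      linarith
    · linarith [hf.marginal_antitone Finset.subset_union_left hj]

variable [Fintype α]

theorem sum_top_marginal_le (hf : Submodular f) (T : Finset α) :
    ∑ j ∈ T, (f Finset.univ - f (Finset.univ.erase j)) ≤ f Finset.univ - f (Finset.univ \ T) := by
  induction T using Finset.induction_on with
  | empty => simp
  | @insert j T hjT ih =>
    rw [Finset.sum_insert hjT]
    have h := hf (Finset.univ.erase j) (Finset.univ \ T)
    have hunion : Finset.univ.erase j ∪ (Finset.univ \ T) = Finset.univ :=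
      Finset.eq_univ_of_forall fun x => by
        by_cases hx : x = j
        · subst hx; simpa using hjT
        · simp [hx]
    have hinter : Finset.univ.erase j ∩ (Finset.univ \ T) = Finset.univ \ insert j T := by
      ext x; simp
    rw [hunion, hinter] at h
    linarith

theorem top_sub_compl_le (hf : Submodular f) (T : Finset α) :
    f Finset.univ - f (Finset.univ \ T) ≤ f T - f ∅ := by
  have h := hf T (Finset.univ \ T)
  rw [Finset.union_sdiff_of_subset (Finset.subset_univ T), Finset.inter_sdiff_self] at h
  linarith

theorem sum_top_marginal_le_sub_empty (hf : Submodular f) (T : Finset α) :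
    ∑ j ∈ T, (f Finset.univ - f (Finset.univ.erase j)) ≤ f T - f ∅ :=
  (hf.sum_top_marginal_le T).trans (hf.top_sub_compl_le T)

end Submodular

section Greedy

variable {α : Type*} [DecidableEq α] [Fintype α] {f g : Finset α → ℝ} {A : Finset α} {r κ : ℝ}

theorem mul_marginal_le_of_ratio_le (hg : Submodular g) (hgmono : Monotone g) (hr : 0 ≤ r)
    (hκ : 0 ≤ κ) (hcurv : ∀ j, κ * (g {j} - g ∅) ≤ g Finset.univ - g (Finset.univ.erase j))
    (hratio : ∀ j ∉ A, f (insert j A) - f A ≤ r * (g (insert j A) - g A)) (j : α) :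
    κ * (f (insert j A) - f A) ≤ r * (g Finset.univ - g (Finset.univ.erase j)) := by
  by_cases hj : j ∈ A
  · rw [Finset.insert_eq_self.2 hj, sub_self, mul_zero]
    exact mul_nonneg hr (sub_nonneg.2 (hgmono (Finset.subset_univ _)))
  · calc κ * (f (insert j A) - f A)
        ≤ κ * (r * (g (insert j A) - g A)) := mul_le_mul_of_nonneg_left (hratio j hj) hκ
      _ ≤ κ * (r * (g {j} - g ∅)) := by
        have := hg.marginal_le_singleton hj
        gcongr
      _ = r * (κ * (g {j} - g ∅)) := by ring
      _ ≤ r * (g Finset.univ - g (Finset.univ.erase j)) :=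
        mul_le_mul_of_nonneg_left (hcurv j) hr

theorem mul_sub_le_of_ratio_le (hf : Submodular f) (hfmono : Monotone f) (hg : Submodular g)
    (hgmono : Monotone g) (hr : 0 ≤ r) (hκ : 0 ≤ κ)
    (hcurv : ∀ j, κ * (g {j} - g ∅) ≤ g Finset.univ - g (Finset.univ.erase j))
    (hratio : ∀ j ∉ A, f (insert j A) - f A ≤ r * (g (insert j A) - g A)) (T : Finset α) :
    κ * (f T - f A) ≤ r * (g T - g ∅) :=
  calc κ * (f T - f A)
      ≤ κ * (f (A ∪ T) - f A) := by
        gcongr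
        exact hfmono Finset.subset_union_right
    _ ≤ κ * ∑ j ∈ T, (f (insert j A) - f A) :=
        mul_le_mul_of_nonneg_left (hf.sub_le_sum_marginal A T) hκ
    _ ≤ r * ∑ j ∈ T, (g Finset.univ - g (Finset.univ.erase j)) := by
        rw [Finset.mul_sum, Finset.mul_sum]
        exact Finset.sum_le_sum fun j _ =>
          mul_marginal_le_of_ratio_le hg hgmono hr hκ hcurv hratio j
    _ ≤ r * (g T - g ∅) := mul_le_mul_of_nonneg_left (hg.sum_top_marginal_le_sub_empty T) hr

end Greedy

theorem stmt_12_general (n : ℕ) (hn : 0 < n) (f g : Finset (Fin n) → ℝ)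
    (hfsub : ∀ S T : Finset (Fin n), f (S ∪ T) + f (S ∩ T) ≤ f S + f T)
    (hgsub : ∀ S T : Finset (Fin n), g (S ∪ T) + g (S ∩ T) ≤ g S + g T)
    (hfmono : ∀ A B : Finset (Fin n), A ⊆ B → f A ≤ f B)
    (hgmono : ∀ A B : Finset (Fin n), A ⊆ B → g A ≤ g B)
    (hgmarg : ∀ (A : Finset (Fin n)) (i : Fin n), i ∉ A → 0 < g (insert i A) - g A)
    (cg : ℝ)
    (hcg : cg = 1 - Finset.univ.inf'
      (Finset.univ_nonempty_iff.mpr (Fin.pos_iff_nonempty.mp hn))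
      (fun i : Fin n => (g Finset.univ - g (Finset.univ.erase i)) / (g {i} - g ∅)))
    (hcg1 : cg < 1)
    (S : ℕ → Finset (Fin n)) (hchain : GreedyChain n f g S)
    (Sstar : Finset (Fin n)) (k : ℕ) (hk : k < n)
    (hfpos : 0 < f Sstar - f (S k)) (hgpos : g ∅ < g Sstar) :
    (1 - cg) * (g (S (k + 1)) - g (S k)) / (g Sstar - g ∅) ≤
      (f (S (k + 1)) - f (S k)) / (f Sstar - f (S k)) := by
  obtain ⟨i, hi, hSk, hmax⟩ := hchain.2 k hk
  set A := S k
  set r := (f (insert i A) - f A) / (g (insert i A) - g A)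
  have hgi : 0 < g (insert i A) - g A := hgmarg A i hi
  have hr : 0 ≤ r := div_nonneg (sub_nonneg.2 (hfmono _ _ (Finset.subset_insert i A))) hgi.le
  have hratio : ∀ j ∉ A, f (insert j A) - f A ≤ r * (g (insert j A) - g A) :=
    fun j hj => (div_le_iff₀ (hgmarg A j hj)).1 (hmax j hj)
  have hcurv : ∀ j, (1 - cg) * (g {j} - g ∅) ≤ g Finset.univ - g (Finset.univ.erase j) := by
    intro j
    rw [hcg, sub_sub_cancel]
    exact Finset.inf'_div_mul_le _ _ _ (Finset.mem_univ j) (by simpa using hgmarg ∅ j (by simp))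
  have hmain : (1 - cg) * (f Sstar - f A) ≤ r * (g Sstar - g ∅) :=
    mul_sub_le_of_ratio_le hfsub (fun _ _ => hfmono _ _) hgsub (fun _ _ => hgmono _ _) hr
      (by linarith) hcurv hratio Sstar
  have hri : r * (g (insert i A) - g A) = f (insert i A) - f A := div_mul_cancel₀ _ hgi.ne'
  rw [hSk, div_le_div_iff₀ (sub_pos.2 hgpos) hfpos, ← hri]
  calc (1 - cg) * (g (insert i A) - g A) * (f Sstar - f A)
      = (g (insert i A) - g A) * ((1 - cg) * (f Sstar - f A)) := by ring
    _ ≤ (g (insert i A) - g A) * (r * (g Sstar - g ∅)) := mul_le_mul_of_nonneg_left hmain hgi.le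
    _ = r * (g (insert i A) - g A) * (g Sstar - g ∅) := by ring

theorem stmt_12 (n : ℕ) (hn : 0 < n) (f g : Finset (Fin n) → ℝ)
    (hfnn : ∀ S : Finset (Fin n), 0 ≤ f S) (hgnn : ∀ S : Finset (Fin n), 0 ≤ g S)
    (hfsub : ∀ S T : Finset (Fin n), f (S ∪ T) + f (S ∩ T) ≤ f S + f T)
    (hgsub : ∀ S T : Finset (Fin n), g (S ∪ T) + g (S ∩ T) ≤ g S + g T)
    (hfmono : ∀ A B : Finset (Fin n), A ⊆ B → f A ≤ f B)
    (hgmono : ∀ A B : Finset (Fin n), A ⊆ B → g A ≤ g B)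
    (hgmarg : ∀ (A : Finset (Fin n)) (i : Fin n), i ∉ A → 0 < g (insert i A) - g A)
    (cg : ℝ)
    (hcg : cg = 1 - Finset.univ.inf'
      (Finset.univ_nonempty_iff.mpr (Fin.pos_iff_nonempty.mp hn))
      (fun i : Fin n => (g Finset.univ - g (Finset.univ.erase i)) / (g {i} - g ∅)))
    (hcg1 : cg < 1)
    (S : ℕ → Finset (Fin n)) (hchain : GreedyChain n f g S)
    (Sstar : Finset (Fin n)) (k : ℕ) (hk : k < n)
    (hfpos : 0 < f Sstar - f (S k)) (hgpos : g ∅ < g Sstar) :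
    (1 - cg) * (g (S (k + 1)) - g (S k)) / (g Sstar - g ∅) ≤
      (f (S (k + 1)) - f (S k)) / (f Sstar - f (S k)) :=
  stmt_12_general n hn f g hfsub hgsub hfmono hgmono hgmarg cg hcg hcg1 S hchain Sstar k hk hfpos
    hgpos
end

section
/- Let f, g : Finset (Fin n) → ℝ be nonnegative, monotone, submodular, and let S_0, ..., S_n be the greedy chain of Algorithm 1 (greedily adding the element maximizing the marginal gain ratio of f over g, assuming g has positive marginals). Let c_g be the curvature of g. Then for any S* ⊆ Fin n there exist an index ℓ and α ∈ [0,1] with g(S*) = (1-α)g(S_ℓ) + α·g(S_{ℓ+1}) and (1 - e^{c_g - 1})·f(S*) ≤ (1-α)·f(S_ℓ) + α·f(S_{ℓ+1}). -/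
lemma marg_mono' {n : ℕ} {f : Finset (Fin n) → ℝ}
    (hsub : ∀ S T : Finset (Fin n), f (S ∪ T) + f (S ∩ T) ≤ f S + f T)
    (hmono : ∀ A B : Finset (Fin n), A ⊆ B → f A ≤ f B)
    {A B : Finset (Fin n)} (hAB : A ⊆ B) (j : Fin n) :
    f (insert j B) - f B ≤ f (insert j A) - f A := by
  by_cases hj : j ∈ B
  · have h1 := hmono A (insert j A) (Finset.subset_insert _ _)
    rw [Finset.insert_eq_self.mpr hj]
    linarith
  · have h := hsub (insert j A) B
    have hu : insert j A ∪ B = insert j B := by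
      rw [Finset.insert_union, Finset.union_eq_right.mpr hAB]
    have hi : insert j A ∩ B = A := by
      rw [Finset.insert_inter_of_notMem hj, Finset.inter_eq_left.mpr hAB]
    rw [hu, hi] at h
    linarith

lemma sum_marg' {n : ℕ} {f : Finset (Fin n) → ℝ}
    (hsub : ∀ S T : Finset (Fin n), f (S ∪ T) + f (S ∩ T) ≤ f S + f T)
    (hmono : ∀ A B : Finset (Fin n), A ⊆ B → f A ≤ f B)
    (A T : Finset (Fin n)) :
    f (A ∪ T) - f A ≤ ∑ j ∈ T, (f (insert j A) - f A) := by
  classical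
  induction T using Finset.induction_on with
  | empty => simp
  | @insert j T hj ih =>
    rw [Finset.union_insert, Finset.sum_insert hj]
    have h1 := marg_mono' hsub hmono (Finset.subset_union_left (s₁ := A) (s₂ := T)) j
    linarith

lemma sum_top' {n : ℕ} {g : Finset (Fin n) → ℝ}
    (hsub : ∀ S T : Finset (Fin n), g (S ∪ T) + g (S ∩ T) ≤ g S + g T)
    (hmono : ∀ A B : Finset (Fin n), A ⊆ B → g A ≤ g B)
    (T : Finset (Fin n)) :
    ∑ j ∈ T, (g Finset.univ - g (Finset.univ.erase j)) ≤ g T - g ∅ := by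
  classical
  induction T using Finset.induction_on with
  | empty => simp
  | @insert j T hj ih =>
    rw [Finset.sum_insert hj]
    have hsubE : T ⊆ Finset.univ.erase j :=
      Finset.subset_erase.mpr ⟨Finset.subset_univ T, hj⟩
    have h1 := marg_mono' hsub hmono hsubE j
    rw [Finset.insert_erase (Finset.mem_univ j)] at h1
    linarith

set_option maxHeartbeats 1000000

theorem stmt_13 (n : ℕ) (hn : 0 < n) (f g : Finset (Fin n) → ℝ)
    (hfnn : ∀ S : Finset (Fin n), 0 ≤ f S) (hgnn : ∀ S : Finset (Fin n), 0 ≤ g S)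
    (hfsub : ∀ S T : Finset (Fin n), f (S ∪ T) + f (S ∩ T) ≤ f S + f T)
    (hgsub : ∀ S T : Finset (Fin n), g (S ∪ T) + g (S ∩ T) ≤ g S + g T)
    (hfmono : ∀ A B : Finset (Fin n), A ⊆ B → f A ≤ f B)
    (hgmono : ∀ A B : Finset (Fin n), A ⊆ B → g A ≤ g B)
    (hgmarg : ∀ (A : Finset (Fin n)) (i : Fin n), i ∉ A → 0 < g (insert i A) - g A)
    (cg : ℝ)
    (hcg : cg = 1 - Finset.univ.inf'
      (Finset.univ_nonempty_iff.mpr (Fin.pos_iff_nonempty.mp hn))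
      (fun i : Fin n => (g Finset.univ - g (Finset.univ.erase i)) / (g {i} - g ∅)))
    (S : ℕ → Finset (Fin n)) (hchain : GreedyChain n f g S)
    (Sstar : Finset (Fin n)) :
    ∃ ℓ < n, ∃ α ∈ Set.Icc (0:ℝ) 1,
      g Sstar = (1 - α) * g (S ℓ) + α * g (S (ℓ + 1)) ∧
      (1 - Real.exp (cg - 1)) * f Sstar ≤ (1 - α) * f (S ℓ) + α * f (S (ℓ + 1)) := by
  classical
  obtain ⟨hS0, hstep⟩ := hchain
  -- basic chain facts
  have hsubset : ∀ k < n, S k ⊆ S (k + 1) := by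
    intro k hk
    obtain ⟨i, hi, hins, -⟩ := hstep k hk
    rw [hins]; exact Finset.subset_insert _ _
  have hcard : ∀ k, k ≤ n → (S k).card = k := by
    intro k
    induction k with
    | zero => intro _; rw [hS0]; simp
    | succ k ih =>
      intro hk
      obtain ⟨i, hi, hins, -⟩ := hstep k (by omega)
      rw [hins, Finset.card_insert_of_notMem hi, ih (by omega)]
  have hSn : S n = Finset.univ :=
    Finset.eq_univ_of_card _ (by rw [hcard n le_rfl, Fintype.card_fin])
  have hgdelta : ∀ k < n, 0 < g (S (k+1)) - g (S k) := by
    intro k hk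
    obtain ⟨i, hi, hins, -⟩ := hstep k hk
    rw [hins]; exact hgmarg _ i hi
  -- locate ℓ
  have hfind : (g Sstar ≤ g (S 0)) ∨
      ∃ ℓ < n, g (S ℓ) < g Sstar ∧ g Sstar ≤ g (S (ℓ+1)) := by
    have hTop : g Sstar ≤ g (S n) := by
      rw [hSn]; exact hgmono _ _ (Finset.subset_univ _)
    have hdesc : ∀ m, m ≤ n → g Sstar ≤ g (S m) →
        (g Sstar ≤ g (S 0)) ∨
        ∃ ℓ < n, g (S ℓ) < g Sstar ∧ g Sstar ≤ g (S (ℓ+1)) := by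
      intro m
      induction m with
      | zero => intro _ h; exact Or.inl h
      | succ k ih =>
        intro hk h
        by_cases h' : g Sstar ≤ g (S k)
        · exact ih (by omega) h'
        · exact Or.inr ⟨k, by omega, lt_of_not_ge h', h⟩
    exact hdesc n le_rfl hTop
  rcases hfind with h0 | ⟨ℓ, hℓ, hgl, hgl1⟩
  · -- degenerate case : g Sstar ≤ g ∅, forcing Sstar = ∅
    rw [hS0] at h0
    have hSstar : Sstar = ∅ := by
      by_contra hne
      obtain ⟨j, hj⟩ := Finset.nonempty_iff_ne_empty.mpr hne
      have h1 : g (insert j ∅) ≤ g Sstar :=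
        hgmono _ _ (Finset.insert_subset hj (Finset.empty_subset _))
      have h2 := hgmarg ∅ j (Finset.notMem_empty j)
      linarith
    refine ⟨0, hn, 0, ⟨le_rfl, zero_le_one⟩, ?_, ?_⟩
    · rw [hSstar, hS0]; ring
    · rw [hSstar, hS0]
      have h1 := Real.exp_pos (cg - 1)
      have h2 := hfnn (∅ : Finset (Fin n))
      nlinarith
  · -- main case
    obtain ⟨i, hi, hins, hgr⟩ := hstep ℓ hℓ
    have hδ : 0 < g (S (ℓ+1)) - g (S ℓ) := hgdelta ℓ hℓ
    set α := (g Sstar - g (S ℓ)) / (g (S (ℓ+1)) - g (S ℓ)) with hαdef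
    have hα0 : 0 ≤ α := div_nonneg (by linarith) hδ.le
    have hα1 : α ≤ 1 := (div_le_one hδ).mpr (by linarith)
    have hαδ : α * (g (S (ℓ+1)) - g (S ℓ)) = g Sstar - g (S ℓ) :=
      div_mul_cancel₀ _ hδ.ne'
    refine ⟨ℓ, hℓ, α, ⟨hα0, hα1⟩, by linarith [hαδ]; , ?_⟩
-- continuation to splice in place of `sorry`
    -- f-part
    rcases le_or_gt 1 cg with hcg1 | hcg1
    · -- trivial when cg ≥ 1
      have h1 : (1:ℝ) ≤ Real.exp (cg - 1) := by
        calc (1:ℝ) = Real.exp 0 := Real.exp_zero.symm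
        _ ≤ _ := Real.exp_le_exp.mpr (by linarith)
      nlinarith [mul_nonneg (sub_nonneg.mpr hα1) (hfnn (S ℓ)),
        mul_nonneg hα0 (hfnn (S (ℓ+1))),
        mul_nonneg (by linarith : (0:ℝ) ≤ Real.exp (cg - 1) - 1) (hfnn Sstar)]
    · -- real work: cg < 1
      set c := 1 - cg with hcdef
      have hc : 0 < c := by rw [hcdef]; linarith
      have hG : 0 < g Sstar - g ∅ := by
        have h1 := hgmono ∅ (S ℓ) (Finset.empty_subset _)
        linarith
      set G := g Sstar - g ∅ with hGdef
      -- curvature bound per element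
      have hcurv : ∀ j : Fin n,
          c * (g (insert j ∅) - g ∅) ≤ g Finset.univ - g (Finset.univ.erase j) := by
        intro j
        have hden : 0 < g (insert j ∅) - g ∅ := hgmarg ∅ j (Finset.notMem_empty j)
        have hsing : (insert j ∅ : Finset (Fin n)) = {j} := rfl
        have hceq : c = Finset.univ.inf'
            (Finset.univ_nonempty_iff.mpr (Fin.pos_iff_nonempty.mp hn))
            (fun i : Fin n => (g Finset.univ - g (Finset.univ.erase i)) / (g {i} - g ∅)) := by
          rw [hcdef, hcg]; ring
        have hinf : c ≤ (g Finset.univ - g (Finset.univ.erase j)) / (g {j} - g ∅) := by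
          rw [hceq]; exact Finset.inf'_le _ (Finset.mem_univ j)
        rw [hsing] at hden ⊢
        exact (le_div_iff₀ hden).mp hinf
      -- key per-step inequality
      have key : ∀ k, k < n →
          c * (g (S (k+1)) - g (S k)) * (f Sstar - f (S k)) ≤
            G * (f (S (k+1)) - f (S k)) := by
        intro k hk
        obtain ⟨i', hi', hins', hgr'⟩ := hstep k hk
        have hδk : 0 < g (S (k+1)) - g (S k) := hgdelta k hk
        set r := (f (S (k+1)) - f (S k)) / (g (S (k+1)) - g (S k)) with hrdef
        have hρ : 0 ≤ f (S (k+1)) - f (S k) := by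
          have := hfmono (S k) (S (k+1)) (hsubset k hk); linarith
        have hrnn : 0 ≤ r := div_nonneg hρ hδk.le
        have hterm : ∀ j ∈ Sstar \ S k,
            f (insert j (S k)) - f (S k) ≤ r * (g (insert j ∅) - g ∅) := by
          intro j hj
          have hjns : j ∉ S k := (Finset.mem_sdiff.mp hj).2
          have hgj : 0 < g (insert j (S k)) - g (S k) := hgmarg _ j hjns
          have hratio := hgr' j hjns
          rw [← hins'] at hratio
          rw [← hrdef] at hratio
          have h1 : f (insert j (S k)) - f (S k) ≤ r * (g (insert j (S k)) - g (S k)) :=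
            (div_le_iff₀ hgj).mp hratio
          have h2 : g (insert j (S k)) - g (S k) ≤ g (insert j ∅) - g ∅ :=
            marg_mono' hgsub hgmono (Finset.empty_subset _) j
          nlinarith
        have hsum1 : f Sstar - f (S k) ≤
            ∑ j ∈ Sstar \ S k, (f (insert j (S k)) - f (S k)) := by
          have h1 : f Sstar ≤ f (S k ∪ Sstar) :=
            hfmono _ _ Finset.subset_union_right
          have h2 := sum_marg' hfsub hfmono (S k) (Sstar \ S k)
          rw [Finset.union_sdiff_self_eq_union] at h2
          linarith
        have hsum2 : ∑ j ∈ Sstar \ S k, (f (insert j (S k)) - f (S k)) ≤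
            r * ∑ j ∈ Sstar \ S k, (g (insert j ∅) - g ∅) := by
          rw [Finset.mul_sum]
          exact Finset.sum_le_sum hterm
        have hsum3 : c * ∑ j ∈ Sstar \ S k, (g (insert j ∅) - g ∅) ≤ G := by
          have h1 : ∑ j ∈ Sstar \ S k, (g Finset.univ - g (Finset.univ.erase j)) ≤
              ∑ j ∈ Sstar, (g Finset.univ - g (Finset.univ.erase j)) := by
            apply Finset.sum_le_sum_of_subset_of_nonneg (Finset.sdiff_subset)
            intro j _ _
            have := hgmono (Finset.univ.erase j) Finset.univ (Finset.erase_subset _ _)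
            linarith
          have h2 := sum_top' hgsub hgmono Sstar
          have h3 : c * ∑ j ∈ Sstar \ S k, (g (insert j ∅) - g ∅) ≤
              ∑ j ∈ Sstar \ S k, (g Finset.univ - g (Finset.univ.erase j)) := by
            rw [Finset.mul_sum]
            exact Finset.sum_le_sum fun j _ => hcurv j
          rw [hGdef]
          linarith
        -- assemble
        have hA : f Sstar - f (S k) ≤
            r * ∑ j ∈ Sstar \ S k, (g (insert j ∅) - g ∅) := le_trans hsum1 hsum2
        have hB : c * (f Sstar - f (S k)) ≤
            c * (r * ∑ j ∈ Sstar \ S k, (g (insert j ∅) - g ∅)) :=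
          mul_le_mul_of_nonneg_left hA hc.le
        have hC : r * (c * ∑ j ∈ Sstar \ S k, (g (insert j ∅) - g ∅)) ≤ r * G :=
          mul_le_mul_of_nonneg_left hsum3 hrnn
        have hcomm : c * (r * ∑ j ∈ Sstar \ S k, (g (insert j ∅) - g ∅)) =
            r * (c * ∑ j ∈ Sstar \ S k, (g (insert j ∅) - g ∅)) := by ring
        have hD : c * (f Sstar - f (S k)) ≤ r * G := by
          rw [hcomm] at hB; linarith
        have hE := mul_le_mul_of_nonneg_left hD hδk.le
        have hrδ : r * (g (S (k+1)) - g (S k)) = f (S (k+1)) - f (S k) :=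
          div_mul_cancel₀ _ hδk.ne'
        nlinarith [hE, hrδ]
      -- exponential decay along the chain
      have main : ∀ k, k ≤ n → f Sstar - f (S k) ≤
          f Sstar * Real.exp (-(c * (g (S k) - g ∅) / G)) := by
        intro k
        induction k with
        | zero =>
          intro _
          rw [hS0]
          simp only [sub_self, mul_zero, zero_div, neg_zero, Real.exp_zero, mul_one]
          linarith [hfnn (∅ : Finset (Fin n))]
        | succ k ih =>
          intro hk1
          have hk : k < n := by omega
          have ihk := ih (by omega)
          have hkey := key k hk
          have hδk : 0 < g (S (k+1)) - g (S k) := hgdelta k hk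
          set x := c * (g (S (k+1)) - g (S k)) / G with hxdef
          have hx : 0 < x := by
            apply div_pos _ hG
            exact mul_pos hc hδk
          have hxD : x * (f Sstar - f (S k)) ≤ f (S (k+1)) - f (S k) := by
            rw [hxdef, div_mul_eq_mul_div]
            rw [div_le_iff₀ hG]
            nlinarith [hkey]
          have hEE : Real.exp (-(c * (g (S k) - g ∅) / G)) * Real.exp (-x) =
              Real.exp (-(c * (g (S (k+1)) - g ∅) / G)) := by
            rw [← Real.exp_add]
            congr 1
            rw [hxdef]
            field_simp
            ring
          have hρ : 0 ≤ f (S (k+1)) - f (S k) := by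
            have := hfmono (S k) (S (k+1)) (hsubset k hk); linarith
          rcases le_or_gt (f Sstar - f (S k)) 0 with hD | hD
          · have hpos : 0 ≤ f Sstar * Real.exp (-(c * (g (S (k+1)) - g ∅) / G)) :=
              mul_nonneg (hfnn _) (Real.exp_pos _).le
            linarith
          · have h1x : 1 - x ≤ Real.exp (-x) := by
              have := Real.add_one_le_exp (-x); linarith
            have h2 : f Sstar - f (S (k+1)) ≤
                (f Sstar - f (S k)) - x * (f Sstar - f (S k)) := by linarith
            have h3 : (f Sstar - f (S k)) - x * (f Sstar - f (S k)) ≤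
                (f Sstar - f (S k)) * Real.exp (-x) := by
              have h3' := mul_le_mul_of_nonneg_left h1x hD.le
              nlinarith [h3']
            have h4 : (f Sstar - f (S k)) * Real.exp (-x) ≤
                (f Sstar * Real.exp (-(c * (g (S k) - g ∅) / G))) * Real.exp (-x) :=
              mul_le_mul_of_nonneg_right ihk (Real.exp_pos _).le
            rw [mul_assoc, hEE] at h4
            linarith
      -- final fractional step
      have mainℓ := main ℓ hℓ.le
      have hkeyℓ := key ℓ hℓ
      set x := c * (g (S (ℓ+1)) - g (S ℓ)) / G with hxdef
      have hxD : x * (f Sstar - f (S ℓ)) ≤ f (S (ℓ+1)) - f (S ℓ) := by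
        rw [hxdef, div_mul_eq_mul_div]
        rw [div_le_iff₀ hG]
        nlinarith [hkeyℓ]
      have hEE : Real.exp (-(c * (g (S ℓ) - g ∅) / G)) * Real.exp (-(α * x)) =
          Real.exp (cg - 1) := by
        rw [← Real.exp_add]
        congr 1
        rw [hxdef]
        have h1 : g (S ℓ) - g ∅ + α * (g (S (ℓ+1)) - g (S ℓ)) = G := by
          rw [hGdef]; linarith [hαδ]
        have h2 : -(c * (g (S ℓ) - g ∅) / G) + -(α * (c * (g (S (ℓ+1)) - g (S ℓ)) / G)) =
            -(c * (g (S ℓ) - g ∅ + α * (g (S (ℓ+1)) - g (S ℓ)))) / G := by ring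
        rw [h2, h1, neg_div, mul_div_assoc, div_self hG.ne', mul_one, hcdef]
        ring
      have hρ : 0 ≤ f (S (ℓ+1)) - f (S ℓ) := by
        have := hfmono (S ℓ) (S (ℓ+1)) (hsubset ℓ hℓ); linarith
      have hfinal : f Sstar - ((1 - α) * f (S ℓ) + α * f (S (ℓ+1))) ≤
          f Sstar * Real.exp (cg - 1) := by
        rcases le_or_gt (f Sstar - f (S ℓ)) 0 with hD | hD
        · have hpos : 0 ≤ f Sstar * Real.exp (cg - 1) :=
            mul_nonneg (hfnn _) (Real.exp_pos _).le
          nlinarith [mul_nonneg hα0 hρ]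
        · have heq : f Sstar - ((1 - α) * f (S ℓ) + α * f (S (ℓ+1))) =
              (f Sstar - f (S ℓ)) - α * (f (S (ℓ+1)) - f (S ℓ)) := by ring
          have hαρ : α * (x * (f Sstar - f (S ℓ))) ≤ α * (f (S (ℓ+1)) - f (S ℓ)) :=
            mul_le_mul_of_nonneg_left hxD hα0
          have h1x : 1 - α * x ≤ Real.exp (-(α * x)) := by
            have := Real.add_one_le_exp (-(α * x)); linarith
          have h3 : (f Sstar - f (S ℓ)) - α * (x * (f Sstar - f (S ℓ))) ≤
              (f Sstar - f (S ℓ)) * Real.exp (-(α * x)) := by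
            have h3' := mul_le_mul_of_nonneg_left h1x hD.le
            nlinarith [h3']
          have h4 : (f Sstar - f (S ℓ)) * Real.exp (-(α * x)) ≤
              (f Sstar * Real.exp (-(c * (g (S ℓ) - g ∅) / G))) * Real.exp (-(α * x)) :=
            mul_le_mul_of_nonneg_right mainℓ (Real.exp_pos _).le
          rw [mul_assoc, hEE] at h4
          linarith
      linarith
end

section
/- Let f, g : Finset (Fin n) → ℝ be nonnegative, monotone, submodular, with g positive-valued with positive marginals and curvature c_g. Let S be the output of the greedy algorithm with final selection maximizing f(S_k)/g(S_k) over the greedy chain. Then for every S* ⊆ Fin n: (1 - e^{c_g - 1})·f(S*)/g(S*) ≤ f(S)/g(S). -/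
private lemma submod_marg {α : Type*} [DecidableEq α] (f : Finset α → ℝ)
    (hsub : ∀ S T, f (S ∪ T) + f (S ∩ T) ≤ f S + f T)
    {A B : Finset α} (hAB : A ⊆ B) {j : α} (hj : j ∉ B) :
    f (insert j B) - f B ≤ f (insert j A) - f A := by
  have h := hsub (insert j A) B
  rw [Finset.insert_union, Finset.union_eq_right.mpr hAB,
    Finset.insert_inter_of_notMem hj, Finset.inter_eq_left.mpr hAB] at h
  linarith

private lemma submod_teleup {α : Type*} [DecidableEq α] (f : Finset α → ℝ)
    (hsub : ∀ S T, f (S ∪ T) + f (S ∩ T) ≤ f S + f T)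
    (C D : Finset α) :
    f (C ∪ D) ≤ f C + ∑ j ∈ D \ C, (f (insert j C) - f C) := by
  induction D using Finset.induction_on with
  | empty => simp
  | @insert a D' ha ih =>
    by_cases hc : a ∈ C
    · have h1 : C ∪ insert a D' = C ∪ D' := by
        rw [Finset.union_insert, Finset.insert_eq_self.mpr (Finset.mem_union_left _ hc)]
      have h2 : insert a D' \ C = D' \ C := by
        rw [Finset.insert_sdiff_of_mem _ hc]
      rw [h1, h2]; exact ih
    · have h1 : C ∪ insert a D' = insert a (C ∪ D') := by
        rw [Finset.union_insert]
      have haD : a ∉ C ∪ D' := by simp [hc, ha]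
      have h3 := submod_marg f hsub (Finset.subset_union_left (s₁ := C) (s₂ := D')) haD
      have h2 : insert a D' \ C = insert a (D' \ C) := by
        rw [Finset.insert_sdiff_of_notMem _ hc]
      have h4 : a ∉ D' \ C := by simp [ha]
      rw [h1, h2, Finset.sum_insert h4]
      linarith

private lemma submod_telelow {α : Type*} [DecidableEq α] [Fintype α] (g : Finset α → ℝ)
    (hsub : ∀ S T, g (S ∪ T) + g (S ∩ T) ≤ g S + g T)
    (D : Finset α) :
    g ∅ + ∑ j ∈ D, (g Finset.univ - g (Finset.univ.erase j)) ≤ g D := by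
  induction D using Finset.induction_on with
  | empty => simp
  | @insert a D' ha ih =>
    have hsubs : D' ⊆ Finset.univ.erase a := by
      rw [Finset.subset_erase]; exact ⟨Finset.subset_univ _, ha⟩
    have h := submod_marg g hsub hsubs (Finset.notMem_erase a _)
    rw [Finset.insert_erase (Finset.mem_univ a)] at h
    rw [Finset.sum_insert ha]
    linarith

private lemma conv_piece (K a b t β : ℝ) (hK : 0 ≤ K) (hat : a ≤ t) (htb : t ≤ b)
    (h1 : K * Real.exp (-a) ≤ β * (b - a + 1)) (h2 : K * Real.exp (-b) ≤ β)
    (hβ : 0 ≤ β) : K * Real.exp (-t) ≤ β * (b - t + 1) := by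
  rcases le_or_gt b a with hba | hab
  · have hta : t = a := le_antisymm (le_trans htb hba) hat
    have htb' : t = b := le_antisymm htb (le_trans hba hat)
    rw [hta]
    have : b - a + 1 = 1 := by rw [← hta, htb']; ring
    rw [this, mul_one]
    rw [hta] at htb'
    rw [htb']
    exact h2
  · set lam := (t - a) / (b - a) with hlam
    have hba' : 0 < b - a := by linarith
    have hlam0 : 0 ≤ lam := div_nonneg (by linarith) hba'.le
    have hlam1 : lam ≤ 1 := (div_le_one hba').mpr (by linarith)
    have hconv := convexOn_exp.2 (Set.mem_univ (-a)) (Set.mem_univ (-b))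
      (by linarith : (0:ℝ) ≤ 1 - lam) hlam0 (by ring)
    have hteq : (1 - lam) • (-a) + lam • (-b) = -t := by
      simp only [smul_eq_mul]
      have : lam * (b - a) = t - a := div_mul_cancel₀ _ (ne_of_gt hba')
      nlinarith [this]
    rw [hteq] at hconv
    simp only [smul_eq_mul] at hconv
    have h3 : K * Real.exp (-t) ≤ (1 - lam) * (K * Real.exp (-a)) + lam * (K * Real.exp (-b)) := by
      have := mul_le_mul_of_nonneg_left hconv hK
      nlinarith [this]
    have h4 : (1 - lam) * (K * Real.exp (-a)) ≤ (1 - lam) * (β * (b - a + 1)) :=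
      mul_le_mul_of_nonneg_left h1 (by linarith)
    have h5 : lam * (K * Real.exp (-b)) ≤ lam * β := mul_le_mul_of_nonneg_left h2 hlam0
    have h6 : (1 - lam) * (β * (b - a + 1)) + lam * β = β * (b - t + 1) := by
      have : lam * (b - a) = t - a := div_mul_cancel₀ _ (ne_of_gt hba')
      nlinarith [this]
    linarith

private lemma caseB_contra (β T c gj gS g0 y w fy fw F : ℝ)
    (hβpos : 0 < β) (hTpos : 0 < T) (hcpos : 0 < c) (hgSpos : 0 < gS)
    (hgj_mul : β * gj * c = gS * c - β)
    (hTgS : T * gS = F)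
    (hγpos : 0 < w - y)
    (hu' : fy < β * T * y)
    (huK : fw < β * T * w)
    (hδf : c * ((F - fy) * (w - y)) ≤ fw - fy)
    (hyle : y ≤ gj) (hwgt : gj < w)
    (hexpK : F - fy ≤ F * Real.exp (-(c * (y - g0))))
    (hKEY : c * gS * Real.exp (-(c * (gj - g0))) ≤ β) : False := by
  set γ := w - y with hγ
  set s := gj - y with hs
  set u' := β * T * y - fy with hu'def
  have hu'pos : 0 < u' := by rw [hu'def]; linarith
  have hs0 : 0 ≤ s := by rw [hs]; linarith
  have hsγ : s ≤ γ := by rw [hs, hγ]; linarith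
  set Ey := Real.exp (-(c * (y - g0))) with hEy
  have hEypos : 0 < Ey := Real.exp_pos _
  have hM : 0 < u' * (1 - c * γ) + γ * T * c * β * (y - gj) := by
    have e1 : β * T * w - fy - c * ((F - fy) * γ) =
        u' * (1 - c * γ) + γ * T * c * β * (y - gj) := by
      rw [hu'def, hγ, ← hTgS]
      linear_combination (T * (w - y)) * hgj_mul
    have e2 : c * ((F - fy) * γ) ≤ fw - fy := by rw [hγ]; exact hδf
    linarith
  rcases le_or_gt (1 - c * γ) 0 with hfac | hfac
  · have t1 : u' * (1 - c * γ) ≤ 0 := mul_nonpos_of_nonneg_of_nonpos hu'pos.le hfac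
    have t2 : γ * T * c * β * (y - gj) ≤ 0 :=
      mul_nonpos_of_nonneg_of_nonpos (by positivity) (by linarith)
    linarith
  · have hX : c * (gS * Ey * (1 - c * s)) ≤ β := by
      have hsplit : Ey = Real.exp (-(c * (gj - g0))) * Real.exp (c * s) := by
        rw [hEy, ← Real.exp_add]
        congr 1
        rw [hs]; ring
      have h2 : Real.exp (c * s) * (1 - c * s) ≤ 1 := by
        have h3 := Real.add_one_le_exp (-(c * s))
        have h4 : Real.exp (c * s) * Real.exp (-(c * s)) = 1 := by
          rw [← Real.exp_add]; simp
        nlinarith [Real.exp_pos (c * s), h3, h4]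
      calc c * (gS * Ey * (1 - c * s))
          = (c * gS * Real.exp (-(c * (gj - g0)))) * (Real.exp (c * s) * (1 - c * s)) := by
            rw [hsplit]; ring
        _ ≤ (c * gS * Real.exp (-(c * (gj - g0)))) * 1 :=
            mul_le_mul_of_nonneg_left h2 (by positivity)
        _ ≤ β := by rw [mul_one]; exact hKEY
    set B := β * y - gS + gS * Ey with hB
    have hu'le : u' ≤ T * B := by
      have e2 : T * B = β * T * y - F + F * Ey := by
        rw [hB, ← hTgS]; ring
      rw [hu'def, e2]
      linarith
    have hTB : 0 < T * B := lt_of_lt_of_le hu'pos hu'le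
    have hi1 : u' * (1 - c * γ) ≤ (T * B) * (1 - c * γ) :=
      mul_le_mul_of_nonneg_right hu'le hfac.le
    have hi2 : (T * B) * (1 - c * γ) ≤ (T * B) * (1 - c * s) := by
      apply mul_le_mul_of_nonneg_left _ hTB.le
      have := mul_le_mul_of_nonneg_left hsγ hcpos.le
      linarith
    have hch2 : γ * T * c * β * (y - gj) ≤ -((T * c * β) * (s * s)) := by
      have h5 : s * s ≤ γ * s := mul_le_mul_of_nonneg_right hsγ hs0
      have h6 : (T * c * β) * (s * s) ≤ (T * c * β) * (γ * s) :=
        mul_le_mul_of_nonneg_left h5 (by positivity)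
      have e3 : γ * T * c * β * (y - gj) = -((T * c * β) * (γ * s)) := by rw [hs]; ring
      rw [e3]
      linarith
    have hbr : c * (B * (1 - c * s)) - (c * c * β) * (s * s)
        = c * (gS * Ey * (1 - c * s)) - β := by
      rw [hB, hs]
      linear_combination (1 - c * (gj - y)) * hgj_mul
    have hfin : 0 < (T * B) * (1 - c * s) - (T * c * β) * (s * s) := by linarith
    have hfin2 : c * ((T * B) * (1 - c * s) - (T * c * β) * (s * s))
        = T * (c * (gS * Ey * (1 - c * s)) - β) := by
      rw [← hbr]; ring
    have hfin3 : 0 < c * ((T * B) * (1 - c * s) - (T * c * β) * (s * s)) :=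
      mul_pos hcpos hfin
    rw [hfin2] at hfin3
    have : T * (c * (gS * Ey * (1 - c * s)) - β) ≤ 0 :=
      mul_nonpos_of_nonneg_of_nonpos hTpos.le (by linarith)
    linarith

private lemma caseA_contra (β T gS y fn F E : ℝ)
    (hTpos : 0 < T)
    (h8 : gS * E ≤ gS - β * y)
    (h9 : F - fn ≤ F * E)
    (hun : fn < β * T * y)
    (hTgS : T * gS = F) : False := by
  have h1 : T * (gS * E) ≤ T * (gS - β * y) := mul_le_mul_of_nonneg_left h8 hTpos.le
  have h2 : F * E = T * (gS * E) := by rw [← hTgS]; ring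
  have h3 : T * (gS - β * y) = F - β * T * y := by rw [← hTgS]; ring
  linarith

set_option maxHeartbeats 1000000 in
theorem stmt_15 (n : ℕ) (hn : 0 < n) (f g : Finset (Fin n) → ℝ)
    (hfnn : ∀ S : Finset (Fin n), 0 ≤ f S) (hgnn : ∀ S : Finset (Fin n), 0 ≤ g S)
    (hfsub : ∀ S T : Finset (Fin n), f (S ∪ T) + f (S ∩ T) ≤ f S + f T)
    (hgsub : ∀ S T : Finset (Fin n), g (S ∪ T) + g (S ∩ T) ≤ g S + g T)
    (hfmono : ∀ A B : Finset (Fin n), A ⊆ B → f A ≤ f B)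
    (hgmono : ∀ A B : Finset (Fin n), A ⊆ B → g A ≤ g B)
    (hgmarg : ∀ (A : Finset (Fin n)) (i : Fin n), i ∉ A → 0 < g (insert i A) - g A)
    (cg : ℝ)
    (hcg : cg = 1 - Finset.univ.inf'
      (Finset.univ_nonempty_iff.mpr (Fin.pos_iff_nonempty.mp hn))
      (fun i : Fin n => (g Finset.univ - g (Finset.univ.erase i)) / (g {i} - g ∅)))
    (hgposval : ∀ S : Finset (Fin n), 0 < g S)
    (S : ℕ → Finset (Fin n)) (hchain : GreedyChain n f g S)
    (Sout : Finset (Fin n))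
    (hmem : ∃ k ≤ n, Sout = S k)
    (hbest : ∀ k ≤ n, f (S k) / g (S k) ≤ f Sout / g Sout) :
    ∀ Sstar : Finset (Fin n),
      (1 - Real.exp (cg - 1)) * (f Sstar / g Sstar) ≤ f Sout / g Sout := by
  intro Sstar
  obtain ⟨hS0, hstep⟩ := hchain
  obtain ⟨A, hAdef⟩ : ∃ A : ℝ, A = Finset.univ.inf'
      (Finset.univ_nonempty_iff.mpr (Fin.pos_iff_nonempty.mp hn))
      (fun i : Fin n => (g Finset.univ - g (Finset.univ.erase i)) / (g {i} - g ∅)) :=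
    ⟨_, rfl⟩
  have hcg1 : cg - 1 = -A := by rw [hcg, hAdef]; ring
  rw [hcg1]
  have hgm_univ : ∀ i : Fin n, 0 < g Finset.univ - g (Finset.univ.erase i) := by
    intro i
    have h := hgmarg (Finset.univ.erase i) i (Finset.notMem_erase i _)
    rwa [Finset.insert_erase (Finset.mem_univ i)] at h
  have hgm_empty : ∀ i : Fin n, 0 < g {i} - g ∅ := by
    intro i
    have h := hgmarg ∅ i (Finset.notMem_empty i)
    simpa using h
  have hApos : 0 < A := by
    rw [hAdef]
    clear hcg1 hAdef
    refine (Finset.lt_inf'_iff _).mpr ?_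
    intro i _
    exact div_pos (hgm_univ i) (hgm_empty i)
  have hcurv : ∀ i : Fin n, A * (g (insert i ∅) - g ∅) ≤ g Finset.univ - g (Finset.univ.erase i) := by
    intro i
    have h1 : A ≤ (g Finset.univ - g (Finset.univ.erase i)) / (g {i} - g ∅) := by
      rw [hAdef]; exact Finset.inf'_le _ (Finset.mem_univ i)
    have h2 := (le_div_iff₀ (hgm_empty i)).mp h1
    simpa using h2
  have hA1 : A ≤ 1 := by
    have i0 : Fin n := ⟨0, hn⟩
    have h1 : A ≤ (g Finset.univ - g (Finset.univ.erase i0)) / (g {i0} - g ∅) := by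
      rw [hAdef]; exact Finset.inf'_le _ (Finset.mem_univ i0)
    have h2 : g Finset.univ - g (Finset.univ.erase i0) ≤ g {i0} - g ∅ := by
      have h := submod_marg g hgsub (Finset.empty_subset (Finset.univ.erase i0))
        (Finset.notMem_erase i0 _)
      rw [Finset.insert_erase (Finset.mem_univ i0)] at h
      simpa using h
    exact le_trans h1 ((div_le_one (hgm_empty i0)).mpr h2)
  have hcard : ∀ k, k ≤ n → (S k).card = k := by
    intro k
    induction k with
    | zero => intro _; rw [hS0]; simp
    | succ k ih =>
      intro hk
      obtain ⟨i, hi, hins, -⟩ := hstep k (by omega)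
      rw [hins, Finset.card_insert_of_notMem hi, ih (by omega)]
  have hSn : S n = Finset.univ := by
    rw [← Finset.card_eq_iff_eq_univ, hcard n le_rfl, Fintype.card_fin]
  have hg0_le : ∀ k, k ≤ n → g ∅ ≤ g (S k) := by
    intro k
    induction k with
    | zero => intro _; rw [hS0]
    | succ k ih =>
      intro hk
      obtain ⟨i, hi, hins, -⟩ := hstep k (by omega)
      have h1 : g (S k) ≤ g (S (k+1)) := by
        rw [hins]; exact hgmono _ _ (Finset.subset_insert _ _)
      exact le_trans (ih (by omega)) h1
  have hansnn : 0 ≤ f Sout / g Sout := div_nonneg (hfnn _) (hgposval _).le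
  have hexpApos : (0:ℝ) < Real.exp (-A) := Real.exp_pos _
  rcases eq_or_lt_of_le (hfnn Sstar) with hF0 | hFpos
  · rw [← hF0, zero_div, mul_zero]
    exact hansnn
  have hgSpos : 0 < g Sstar := hgposval Sstar
  by_cases hSe : Sstar = ∅
  · have h0 := hbest 0 (Nat.zero_le n)
    rw [hS0, ← hSe] at h0
    have hr : 0 ≤ f Sstar / g Sstar := div_nonneg (hfnn _) hgSpos.le
    nlinarith [mul_nonneg hr hexpApos.le, h0]
  have hSne : Sstar.Nonempty := Finset.nonempty_iff_ne_empty.mpr hSe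
  by_contra hcon
  push_neg at hcon
  obtain ⟨β, hβdef⟩ : ∃ β : ℝ, β = 1 - Real.exp (-A) := ⟨_, rfl⟩
  rw [← hβdef] at hcon
  have hβpos : 0 < β := by
    have : Real.exp (-A) < 1 := Real.exp_lt_one_iff.mpr (by linarith)
    rw [hβdef]; linarith
  have hβ1 : β < 1 := by rw [hβdef]; linarith
  have hβA : β < A := by
    have h := Real.add_one_lt_exp (x := -A) (neg_ne_zero.mpr (ne_of_gt hApos))
    rw [hβdef]; linarith
  obtain ⟨T, hTdef⟩ : ∃ T : ℝ, T = f Sstar / g Sstar := ⟨_, rfl⟩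
  rw [← hTdef] at hcon
  have hTpos : 0 < T := hTdef ▸ div_pos hFpos hgSpos
  have hTgS : T * g Sstar = f Sstar := by
    rw [hTdef]; exact div_mul_cancel₀ _ (ne_of_gt hgSpos)
  have hbadk : ∀ k, k ≤ n → f (S k) < β * T * g (S k) := by
    intro k hk
    have h := lt_of_le_of_lt (hbest k hk) hcon
    rw [div_lt_iff₀ (hgposval _)] at h
    exact h
  obtain ⟨G, hGdef⟩ : ∃ G : ℝ, G = g Sstar - g ∅ := ⟨_, rfl⟩
  have hGpos : 0 < G := by
    obtain ⟨j, hj⟩ := hSne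
    have h1 := hgmarg ∅ j (Finset.notMem_empty j)
    have h2 : g (insert j ∅) ≤ g Sstar :=
      hgmono _ _ (Finset.insert_subset hj (Finset.empty_subset _))
    rw [hGdef]; linarith
  obtain ⟨c, hcdef⟩ : ∃ c : ℝ, c = A / G := ⟨_, rfl⟩
  have hcpos : 0 < c := hcdef ▸ div_pos hApos hGpos
  have hcG : c * G = A := by rw [hcdef]; exact div_mul_cancel₀ _ (ne_of_gt hGpos)
  obtain ⟨gj, hgjdef⟩ : ∃ gj : ℝ, gj = g Sstar / β - 1 / c := ⟨_, rfl⟩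
  have hgj_mul : β * gj * c = g Sstar * c - β := by
    rw [hgjdef]
    field_simp
  -- curvature sum bound
  have hsum_curv : A * (∑ j ∈ Sstar, (g (insert j ∅) - g ∅)) ≤ G := by
    have h1 : ∑ j ∈ Sstar, A * (g (insert j ∅) - g ∅) ≤
        ∑ j ∈ Sstar, (g Finset.univ - g (Finset.univ.erase j)) :=
      Finset.sum_le_sum (fun j _ => hcurv j)
    have h2 := submod_telelow g hgsub Sstar
    rw [Finset.mul_sum, hGdef]
    linarith
  -- greedy key inequality
  have hkey : ∀ k, k < n → A * ((f Sstar - f (S k)) * (g (S (k+1)) - g (S k))) ≤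
      G * (f (S (k+1)) - f (S k)) := by
    intro k hk
    obtain ⟨i, hi, hins, hmax⟩ := hstep k hk
    have hγ : 0 < g (S (k+1)) - g (S k) := by rw [hins]; exact hgmarg _ i hi
    have hγ' : 0 < g (insert i (S k)) - g (S k) := by rw [← hins]; exact hγ
    set r := (f (insert i (S k)) - f (S k)) / (g (insert i (S k)) - g (S k)) with hr
    have hrnn : 0 ≤ r := by
      apply div_nonneg _ hγ'.le
      have := hfmono (S k) (insert i (S k)) (Finset.subset_insert _ _)
      linarith
    have hfr : f (S (k+1)) - f (S k) = r * (g (S (k+1)) - g (S k)) := by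
      rw [hins, hr]
      field_simp
    have h1 : f Sstar - f (S k) ≤ ∑ j ∈ Sstar \ S k, (f (insert j (S k)) - f (S k)) := by
      have h := submod_teleup f hfsub (S k) Sstar
      have h2 : f Sstar ≤ f (S k ∪ Sstar) := hfmono _ _ Finset.subset_union_right
      linarith
    have h3 : ∑ j ∈ Sstar \ S k, (f (insert j (S k)) - f (S k)) ≤
        ∑ j ∈ Sstar \ S k, r * (g (insert j (S k)) - g (S k)) := by
      apply Finset.sum_le_sum
      intro j hj
      have hjnot : j ∉ S k := (Finset.mem_sdiff.mp hj).2
      have hgj' : 0 < g (insert j (S k)) - g (S k) := hgmarg _ j hjnot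
      have hm := hmax j hjnot
      calc f (insert j (S k)) - f (S k)
          = (f (insert j (S k)) - f (S k)) / (g (insert j (S k)) - g (S k)) *
            (g (insert j (S k)) - g (S k)) := by field_simp
        _ ≤ r * (g (insert j (S k)) - g (S k)) := mul_le_mul_of_nonneg_right hm hgj'.le
    have h4 : ∑ j ∈ Sstar \ S k, r * (g (insert j (S k)) - g (S k)) ≤
        r * ∑ j ∈ Sstar, (g (insert j ∅) - g ∅) := by
      rw [Finset.mul_sum]
      have h5 : ∑ j ∈ Sstar \ S k, r * (g (insert j (S k)) - g (S k)) ≤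
          ∑ j ∈ Sstar \ S k, r * (g (insert j ∅) - g ∅) := by
        apply Finset.sum_le_sum
        intro j hj
        exact mul_le_mul_of_nonneg_left
          (submod_marg g hgsub (Finset.empty_subset _) (Finset.mem_sdiff.mp hj).2) hrnn
      refine le_trans h5 (Finset.sum_le_sum_of_subset_of_nonneg Finset.sdiff_subset ?_)
      intro j hj _
      have := hgmarg ∅ j (Finset.notMem_empty j)
      exact mul_nonneg hrnn (by linarith)
    have h6 : A * (f Sstar - f (S k)) ≤ r * G := by
      have h7 : f Sstar - f (S k) ≤ r * ∑ j ∈ Sstar, (g (insert j ∅) - g ∅) :=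
        le_trans h1 (le_trans h3 h4)
      calc A * (f Sstar - f (S k)) ≤ A * (r * ∑ j ∈ Sstar, (g (insert j ∅) - g ∅)) :=
            mul_le_mul_of_nonneg_left h7 hApos.le
        _ = r * (A * ∑ j ∈ Sstar, (g (insert j ∅) - g ∅)) := by ring
        _ ≤ r * G := mul_le_mul_of_nonneg_left hsum_curv hrnn
    calc A * ((f Sstar - f (S k)) * (g (S (k+1)) - g (S k)))
        = (A * (f Sstar - f (S k))) * (g (S (k+1)) - g (S k)) := by ring
      _ ≤ (r * G) * (g (S (k+1)) - g (S k)) := mul_le_mul_of_nonneg_right h6 hγ.le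
      _ = G * (r * (g (S (k+1)) - g (S k))) := by ring
      _ = G * (f (S (k+1)) - f (S k)) := by rw [← hfr]
  have hckey : ∀ k, k < n → c * ((f Sstar - f (S k)) * (g (S (k+1)) - g (S k))) ≤
      f (S (k+1)) - f (S k) := by
    intro k hk
    have h := hkey k hk
    rw [hcdef, div_mul_eq_mul_div, div_le_iff₀ hGpos]
    linarith [h, (by ring : G * (f (S (k+1)) - f (S k)) = (f (S (k+1)) - f (S k)) * G)]
  -- exponential decay bound
  have hexp : ∀ k, k ≤ n →
      f Sstar - f (S k) ≤ f Sstar * Real.exp (-(c * (g (S k) - g ∅))) := by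
    intro k
    induction k with
    | zero =>
      intro _
      rw [hS0]
      simp only [sub_self, mul_zero, neg_zero, Real.exp_zero, mul_one]
      linarith [hfnn (∅ : Finset (Fin n))]
    | succ k ih =>
      intro hk
      have ihk := ih (by omega)
      obtain ⟨i, hi, hins, -⟩ := hstep k (by omega)
      have hγ : 0 < g (S (k+1)) - g (S k) := by rw [hins]; exact hgmarg _ i hi
      have hck := hckey k (by omega)
      have hfm : f (S k) ≤ f (S (k+1)) := by
        rw [hins]; exact hfmono _ _ (Finset.subset_insert _ _)
      have hE : Real.exp (-(c * (g (S (k+1)) - g ∅))) =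
          Real.exp (-(c * (g (S k) - g ∅))) * Real.exp (-(c * (g (S (k+1)) - g (S k)))) := by
        rw [← Real.exp_add]; congr 1; ring
      have hstep2 : f Sstar - f (S (k+1)) ≤
          (f Sstar - f (S k)) * (1 - c * (g (S (k+1)) - g (S k))) := by
        have e : (f Sstar - f (S k)) * (1 - c * (g (S (k+1)) - g (S k))) =
            (f Sstar - f (S k)) - c * ((f Sstar - f (S k)) * (g (S (k+1)) - g (S k))) := by
          ring
        linarith [hck, e]
      rcases le_or_gt (f Sstar - f (S k)) 0 with hneg | hpos
      · have h1 : f Sstar - f (S (k+1)) ≤ 0 := by linarith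
        refine le_trans h1 ?_
        positivity
      · rcases le_or_gt (1 - c * (g (S (k+1)) - g (S k))) 0 with hfac | hfac
        · have h1 : (f Sstar - f (S k)) * (1 - c * (g (S (k+1)) - g (S k))) ≤ 0 :=
            mul_nonpos_of_nonneg_of_nonpos hpos.le hfac
          refine le_trans (le_trans hstep2 h1) ?_
          positivity
        · have h2 : 1 - c * (g (S (k+1)) - g (S k)) ≤
              Real.exp (-(c * (g (S (k+1)) - g (S k)))) := by
            have := Real.add_one_le_exp (-(c * (g (S (k+1)) - g (S k))))
            linarith
          calc f Sstar - f (S (k+1))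
              ≤ (f Sstar - f (S k)) * (1 - c * (g (S (k+1)) - g (S k))) := hstep2
            _ ≤ (f Sstar * Real.exp (-(c * (g (S k) - g ∅)))) *
                (1 - c * (g (S (k+1)) - g (S k))) :=
                mul_le_mul_of_nonneg_right ihk hfac.le
            _ ≤ (f Sstar * Real.exp (-(c * (g (S k) - g ∅)))) *
                Real.exp (-(c * (g (S (k+1)) - g (S k)))) :=
                mul_le_mul_of_nonneg_left h2 (by positivity)
            _ = f Sstar * Real.exp (-(c * (g (S (k+1)) - g ∅))) := by rw [hE]; ring
  -- KEY endpoint inequality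
  obtain ⟨z, hzdef⟩ : ∃ z : ℝ, z = c * g Sstar / β := ⟨_, rfl⟩
  have hzpos : 0 < z := hzdef ▸ div_pos (mul_pos hcpos hgSpos) hβpos
  have hzβ : z * β = c * g Sstar := by
    rw [hzdef]; exact div_mul_cancel₀ _ (ne_of_gt hβpos)
  have hEA : Real.exp (-A) = 1 - β := by rw [hβdef]; ring
  have hcgj : c * gj = z - 1 := by
    rw [hgjdef, hzdef]
    field_simp
  have hAc : A = c * g Sstar - c * g ∅ := by rw [← hcG, hGdef]; ring
  have hKEY : c * g Sstar * Real.exp (-(c * (gj - g ∅))) ≤ β := by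
    have hlog : Real.log z ≤ z * Real.exp (-A) + A - 1 := by
      have h1 := Real.log_le_sub_one_of_pos (x := z * Real.exp (-A)) (by positivity)
      rw [Real.log_mul (ne_of_gt hzpos) (Real.exp_ne_zero _), Real.log_exp] at h1
      linarith
    have hCeq : z * Real.exp (-A) + A - 1 = c * (gj - g ∅) := by
      rw [hEA]
      have h2 : c * (gj - g ∅) = (z - 1) - c * g ∅ := by rw [mul_sub, hcgj]
      rw [h2, hAc]
      linarith [hzβ]
    have h3 : z ≤ Real.exp (c * (gj - g ∅)) := by
      rw [← Real.exp_log hzpos]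
      exact Real.exp_le_exp.mpr (le_of_le_of_eq hlog hCeq)
    calc c * g Sstar * Real.exp (-(c * (gj - g ∅)))
        = (z * Real.exp (-(c * (gj - g ∅)))) * β := by rw [← hzβ]; ring
      _ ≤ (Real.exp (c * (gj - g ∅)) * Real.exp (-(c * (gj - g ∅)))) * β := by
          apply mul_le_mul_of_nonneg_right
            (mul_le_mul_of_nonneg_right h3 (Real.exp_pos _).le) hβpos.le
      _ = β := by rw [← Real.exp_add]; simp
  -- g ∅ < gj
  have hg0gj : g ∅ < gj := by
    have h1 : β / c < g Sstar - g ∅ := by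
      rw [div_lt_iff₀ hcpos, ← hGdef]
      linarith [hcG, hβA, (by ring : G * c = c * G)]
    have h2 : β * g ∅ ≤ g ∅ := by
      have h := mul_nonneg (sub_nonneg.mpr hβ1.le) (hgnn (∅ : Finset (Fin n)))
      nlinarith [h]
    have h3 : (g ∅ + 1 / c) * β < g Sstar := by
      have e1 : (g ∅ + 1 / c) * β = β * g ∅ + β / c := by field_simp
      rw [e1]
      linarith
    have h4 := (lt_div_iff₀ hβpos).mpr h3
    rw [hgjdef]
    linarith
  -- CASE SPLIT
  by_cases hcase : ∃ k, k ≤ n ∧ gj < g (S k)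
  · -- Case B
    classical
    obtain ⟨hKn, hKgt⟩ := Nat.find_spec hcase
    set K := Nat.find hcase with hKdef
    have hK0 : K ≠ 0 := by
      intro h
      rw [h, hS0] at hKgt
      linarith
    obtain ⟨K', hK'⟩ := Nat.exists_eq_succ_of_ne_zero hK0
    have hK'n : K' < n := by omega
    have hyle : g (S K') ≤ gj := by
      by_contra h
      push_neg at h
      exact absurd ⟨by omega, h⟩ (Nat.find_min hcase (by omega))
    rw [hK'] at hKgt hKn
    obtain ⟨i, hi, hins, -⟩ := hstep K' hK'n
    have hγpos : 0 < g (S (K'+1)) - g (S K') := by rw [hins]; exact hgmarg _ i hi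
    exact caseB_contra β T c gj (g Sstar) (g ∅) (g (S K')) (g (S (K'+1)))
      (f (S K')) (f (S (K'+1))) (f Sstar)
      hβpos hTpos hcpos hgSpos hgj_mul hTgS hγpos
      (hbadk K' (by omega)) (hbadk (K'+1) (by omega))
      (hckey K' hK'n) hyle hKgt
      (hexp K' (by omega)) hKEY
  · -- Case A
    push_neg at hcase
    have hy1 : g Sstar ≤ g (S n) := by rw [hSn]; exact hgmono _ _ (Finset.subset_univ _)
    have hy2 : g (S n) ≤ gj := hcase n le_rfl
    have hat : A ≤ c * (g (S n) - g ∅) := by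
      have h := mul_le_mul_of_nonneg_left (sub_le_sub_right hy1 (g ∅)) hcpos.le
      rw [hAc]
      linarith [h, (by ring : c * (g Sstar - g ∅) = c * g Sstar - c * g ∅)]
    have htb : c * (g (S n) - g ∅) ≤ c * (gj - g ∅) :=
      mul_le_mul_of_nonneg_left (sub_le_sub_right hy2 (g ∅)) hcpos.le
    have hend1 : c * g Sstar * Real.exp (-A) ≤ β * (c * (gj - g ∅) - A + 1) := by
      rw [hEA, hAc]
      have ec : c * g Sstar * (1 - β) =
          β * (c * (gj - g ∅) - (c * g Sstar - c * g ∅) + 1) := by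
        linear_combination (-1 : ℝ) * hgj_mul
      linarith [ec]
    have hconv := conv_piece (c * g Sstar) A (c * (gj - g ∅)) (c * (g (S n) - g ∅)) β
      (by positivity) hat htb hend1 hKEY hβpos.le
    have hid : β * (c * (gj - g ∅) - c * (g (S n) - g ∅) + 1) =
        c * (g Sstar - β * g (S n)) := by
      linear_combination hgj_mul
    have h7 : c * (g Sstar * Real.exp (-(c * (g (S n) - g ∅)))) ≤
        c * (g Sstar - β * g (S n)) := by
      calc c * (g Sstar * Real.exp (-(c * (g (S n) - g ∅))))
          = c * g Sstar * Real.exp (-(c * (g (S n) - g ∅))) := by ring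
        _ ≤ β * (c * (gj - g ∅) - c * (g (S n) - g ∅) + 1) := hconv
        _ = c * (g Sstar - β * g (S n)) := hid
    have h8 : g Sstar * Real.exp (-(c * (g (S n) - g ∅))) ≤ g Sstar - β * g (S n) :=
      le_of_mul_le_mul_left h7 hcpos
    exact caseA_contra β T (g Sstar) (g (S n)) (f (S n)) (f Sstar)
      (Real.exp (-(c * (g (S n) - g ∅)))) hTpos h8 (hexp n le_rfl)
      (hbadk n le_rfl) hTgS
end

section
/- Let f : Finset (Fin n) → ℝ be monotone submodular, S ⊆ Fin n, and let S*_3 = {e*_1, e*_2, e*_3} be obtained by three greedy steps on f restricted to a set S* with |S*| ≥ 3 (e*_j maximizes f(S*_{j-1} ∪ {e}) over e ∈ S* \ S*_{j-1}). Then for any set S_G ⊇ S*_3 and any x* ∈ S* \ S_G: f(S_G ∪ {x*}) - f(S_G) ≤ (f(S*_3) - f(∅))/3. -/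
theorem stmt_18 (n : ℕ) (f : Finset (Fin n) → ℝ)
    (hsub : ∀ S T : Finset (Fin n), f (S ∪ T) + f (S ∩ T) ≤ f S + f T)
    (hmono : ∀ A B : Finset (Fin n), A ⊆ B → f A ≤ f B)
    (Sstar : Finset (Fin n)) (hcard : 3 ≤ Sstar.card)
    (e1 e2 e3 : Fin n)
    (he1 : e1 ∈ Sstar) (he1max : ∀ e ∈ Sstar, f {e} ≤ f {e1})
    (he2 : e2 ∈ Sstar \ {e1})
    (he2max : ∀ e ∈ Sstar \ {e1}, f (insert e {e1}) ≤ f (insert e2 {e1}))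
    (he3 : e3 ∈ Sstar \ {e1, e2})
    (he3max : ∀ e ∈ Sstar \ {e1, e2}, f (insert e {e1, e2}) ≤ f (insert e3 {e1, e2}))
    (SG : Finset (Fin n)) (hSG : ({e1, e2, e3} : Finset (Fin n)) ⊆ SG)
    (xstar : Fin n) (hx : xstar ∈ Sstar \ SG) :
    f (insert xstar SG) - f SG ≤ (f {e1, e2, e3} - f ∅) / 3 := by
  obtain ⟨hxS, hxSG⟩ := Finset.mem_sdiff.mp hx
  have h1SG : e1 ∈ SG := hSG (by simp)
  have h2SG : e2 ∈ SG := hSG (by simp)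
  have h3SG : e3 ∈ SG := hSG (by simp)
  have hx1 : xstar ≠ e1 := fun h => hxSG (h ▸ h1SG)
  have hx2 : xstar ≠ e2 := fun h => hxSG (h ▸ h2SG)
  -- key marginal lemma
  have key : ∀ A : Finset (Fin n), A ⊆ SG →
      f (insert xstar SG) - f SG ≤ f (insert xstar A) - f A := by
    intro A hA
    have := hsub (insert xstar A) SG
    have hu : insert xstar A ∪ SG = insert xstar SG := by
      rw [Finset.insert_union, Finset.union_eq_right.mpr hA]
    have hi : insert xstar A ∩ SG = A := by
      rw [Finset.insert_inter_of_notMem hxSG, Finset.inter_eq_left.mpr hA]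
    rw [hu, hi] at this
    linarith
  have hA1 : ({e1} : Finset (Fin n)) ⊆ SG := by
    intro a ha; simp at ha; subst ha; exact h1SG
  have hA2 : ({e1, e2} : Finset (Fin n)) ⊆ SG := by
    intro a ha; simp at ha; rcases ha with h | h <;> subst h <;> assumption
  have k0 := key ∅ (Finset.empty_subset _)
  have k1 := key {e1} hA1
  have k2 := key {e1, e2} hA2
  have g1 : f {xstar} ≤ f {e1} := he1max xstar hxS
  have g2 : f (insert xstar {e1}) ≤ f (insert e2 {e1}) :=
    he2max xstar (Finset.mem_sdiff.mpr ⟨hxS, by simp [hx1]⟩)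
  have g3 : f (insert xstar {e1, e2}) ≤ f (insert e3 {e1, e2}) :=
    he3max xstar (Finset.mem_sdiff.mpr ⟨hxS, by simp [hx1, hx2]⟩)
  have eq2 : insert e2 ({e1} : Finset (Fin n)) = {e1, e2} := Finset.pair_comm e2 e1
  have eq3 : insert e3 ({e1, e2} : Finset (Fin n)) = {e1, e2, e3} := by
    rw [Finset.insert_comm e3 e1]; exact congrArg _ (Finset.pair_comm e3 e2)
  rw [eq2] at g2
  rw [eq3] at g3
  have k0' : f (insert xstar SG) - f SG ≤ f {xstar} - f ∅ := k0
  linarith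
end
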